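/- Every edge decomposable model is identified: if M is a finite set of linear orders on finite X such that for every nonempty N ⊆ M there exist ≻ ∈ N and a pair (x, A) with x ∈ A ⊆ X satisfying N ∩ L(x, A) = {≻}, then any two probability distributions ν, ν' on M inducing the same random choice rule are equal. -/

import Mathlib

open scoped Classical

abbrev Pref (X : Type*) := {r : X → X → Prop // IsStrictTotalOrder X r}

variable {X : Type*} [Fintype X] [DecidableEq X]

/-- `≻ ∈ L(x,A)`: `x` is ranked above all other elements of `A` and
below all elements of `X \ A`. -/
def memL (r : X → X → Prop) (x : X) (A : Finset X) : Prop :=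
  x ∈ A ∧ (∀ y ∈ A, y ≠ x → r x y) ∧ ∀ z, z ∉ A → r z x

/-- The 0-1 vector of the random choice rule induced by a single order:
`pVec r (x, A) = 1` iff `x` is `r`-maximal in `A`. -/
noncomputable def pVec (r : X → X → Prop) : X × Finset X → ℝ :=
  fun z => if z.1 ∈ z.2 ∧ ∀ y ∈ z.2, y ≠ z.1 → r z.1 y then 1 else 0

/-- `q_≻` vector: indicator of `≻ ∈ L(x,A)`. -/
noncomputable def qVec (r : X → X → Prop) : X × Finset X → ℝ :=
  fun z => if memL r z.1 z.2 then 1 else 0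

/-- `ν` is a probability distribution over the model `M`. -/
def IsDist (M : Finset (Pref X)) (ν : Pref X → ℝ) : Prop :=
  (∀ r, 0 ≤ ν r) ∧ (∀ r, r ∉ M → ν r = 0) ∧ ∑ r ∈ M, ν r = 1

/-- The random choice rule induced by `ν` over `M`. -/
noncomputable def pRCR (M : Finset (Pref X)) (ν : Pref X → ℝ) : X × Finset X → ℝ :=
  fun z => ∑ r ∈ M, ν r * pVec r.1 z

/-- The model `M` is identified. -/
def Identified (M : Finset (Pref X)) : Prop :=
  ∀ ν ν' : Pref X → ℝ, IsDist M ν → IsDist M ν' → pRCR M ν = pRCR M ν' → ν = ν'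

/-- Edge decomposability. -/
def EdgeDecomposable (M : Finset (Pref X)) : Prop :=
  ∀ N ⊆ M, N.Nonempty →
    ∃ r ∈ N, ∃ (x : X) (A : Finset X), x ∈ A ∧
      ∀ s ∈ N, (memL s.1 x A ↔ s = r)

noncomputable instance : Fintype (Pref X) := Fintype.ofFinite _

lemma real_sum_powerset (s : Finset X) :
    (∑ m ∈ s.powerset, (-1 : ℝ) ^ m.card) = if s = ∅ then 1 else 0 := by
  have h := @Finset.sum_powerset_neg_one_pow_card X _ s
  have h2 := congrArg (fun n : ℤ => (n : ℝ)) h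
  push_cast at h2
  convert h2 using 2 <;> split <;> simp

/-- key pointwise identity -/
lemma key (r : Pref X) (x : X) (A : Finset X) (hx : x ∈ A) :
    qVec r.1 (x, A) =
      ∑ B ∈ Finset.univ.filter (fun B : Finset X => A ⊆ B),
        (-1 : ℝ) ^ (B.card - A.card) * pVec r.1 (x, B) := by
  classical
  haveI := r.2
  set C : Finset X := insert x (Finset.univ.filter (fun y => r.1 x y)) with hC
  have hxC : x ∈ C := Finset.mem_insert_self _ _
  have hmemC : ∀ y, y ∈ C ↔ (y = x ∨ r.1 x y) := by
    intro y; simp [hC]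
  -- pVec r (x, B) = 1 iff x ∈ B ∧ B ⊆ C
  have hp : ∀ B : Finset X, pVec r.1 (x, B) = if x ∈ B ∧ B ⊆ C then 1 else 0 := by
    intro B
    unfold pVec
    congr 1
    simp only [eq_iff_iff]
    constructor
    · rintro ⟨h1, h2⟩
      refine ⟨h1, fun y hy => ?_⟩
      rcases eq_or_ne y x with h | h
      · simp [hmemC, h]
      · exact (hmemC y).2 (Or.inr (h2 y hy h))
    · rintro ⟨h1, h2⟩
      refine ⟨h1, fun y hy hne => ?_⟩
      rcases (hmemC y).1 (h2 hy) with h | h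
      · exact absurd h hne
      · exact h
  -- memL iff A = C
  have hq : memL r.1 x A ↔ A = C := by
    constructor
    · rintro ⟨_, h2, h3⟩
      apply Finset.Subset.antisymm
      · intro y hy
        rcases eq_or_ne y x with h | h
        · simp [hmemC, h]
        · exact (hmemC y).2 (Or.inr (h2 y hy h))
      · intro y hy
        by_contra hyA
        have := h3 y hyA
        rcases (hmemC y).1 hy with h | h
        · exact (r.2.irrefl x) (h ▸ this)
        · exact (r.2.irrefl x) (r.2.trans _ _ _ h this)
    · rintro rfl
      refine ⟨hxC, fun y hy hne => ?_, fun z hz => ?_⟩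
      · rcases (hmemC y).1 hy with h | h
        · exact absurd h hne
        · exact h
      · rcases trichotomous_of r.1 z x with h | h | h
        · exact h
        · exact absurd ((hmemC z).2 (Or.inl h)) hz
        · exact absurd ((hmemC z).2 (Or.inr h)) hz
  -- rewrite RHS as a sum over the interval [A, C]
  have hRHS : ∑ B ∈ Finset.univ.filter (fun B : Finset X => A ⊆ B),
        (-1 : ℝ) ^ (B.card - A.card) * pVec r.1 (x, B)
      = ∑ B ∈ Finset.univ.filter (fun B : Finset X => A ⊆ B ∧ B ⊆ C),
        (-1 : ℝ) ^ (B.card - A.card) := by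
    rw [Finset.sum_filter, Finset.sum_filter]
    apply Finset.sum_congr rfl
    intro B _
    rw [hp B]
    by_cases h1 : A ⊆ B
    · by_cases h2 : B ⊆ C
      · simp [h1, h2, h1 hx]
      · simp [h1, h2]
    · simp [h1]
  rw [hRHS]
  by_cases hAC : A ⊆ C
  · -- reindex by D = B \ A over powerset of C \ A
    have hre : ∑ B ∈ Finset.univ.filter (fun B : Finset X => A ⊆ B ∧ B ⊆ C),
          (-1 : ℝ) ^ (B.card - A.card)
        = ∑ D ∈ (C \ A).powerset, (-1 : ℝ) ^ D.card := by
      apply Finset.sum_nbij' (fun B => B \ A) (fun D => A ∪ D)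
      · intro B hB
        simp only [Finset.mem_filter] at hB
        rw [Finset.mem_powerset]
        exact Finset.sdiff_subset_sdiff hB.2.2 (Finset.Subset.refl A)
      · intro D hD
        rw [Finset.mem_powerset] at hD
        simp only [Finset.mem_filter, Finset.mem_univ, true_and]
        constructor
        · exact Finset.subset_union_left
        · exact Finset.union_subset hAC (hD.trans (Finset.sdiff_subset))
      · intro B hB
        simp only [Finset.mem_filter] at hB
        exact Finset.union_sdiff_of_subset hB.2.1
      · intro D hD
        rw [Finset.mem_powerset] at hD
        rw [Finset.union_sdiff_cancel_left]
        exact Finset.disjoint_left.2 fun a ha hb => (Finset.mem_sdiff.1 (hD hb)).2 ha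
      · intro B hB
        simp only [Finset.mem_filter] at hB
        congr 1
        exact (Finset.card_sdiff_of_subset hB.2.1).symm
    rw [hre, real_sum_powerset]
    unfold qVec
    simp only
    rw [hq]
    have : C \ A = ∅ ↔ A = C := by
      rw [Finset.sdiff_eq_empty_iff_subset]
      exact ⟨fun h => Finset.Subset.antisymm hAC h, fun h => h ▸ Finset.Subset.refl _⟩
    by_cases h : A = C
    · simp [h, this]
    · rw [if_neg h, if_neg (fun hh => h (this.1 hh))]
  · -- A ⊄ C : both sides zero
    have hempty : Finset.univ.filter (fun B : Finset X => A ⊆ B ∧ B ⊆ C) = ∅ := by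
      ext B
      simp only [Finset.mem_filter, Finset.mem_univ, true_and, Finset.notMem_empty, iff_false]
      rintro ⟨h1, h2⟩
      exact hAC (h1.trans h2)
    rw [hempty, Finset.sum_empty]
    unfold qVec
    simp only
    rw [hq, if_neg (fun h => hAC (by rw [h]))]

/-- Every edge decomposable model is identified. -/
theorem stmt_12 (M : Finset (Pref X)) (hM : M.Nonempty)
    (hED : EdgeDecomposable M) : Identified M := by
  intro ν ν' hν hν' hp
  set d : Pref X → ℝ := fun r => ν r - ν' r with hd
  have h1 : ∀ z, ∑ r ∈ M, d r * pVec r.1 z = 0 := by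
    intro z
    have := congrFun hp z
    unfold pRCR at this
    simp only [hd, sub_mul, Finset.sum_sub_distrib]
    rw [this]; ring
  have h2 : ∀ (x : X) (A : Finset X), x ∈ A → ∑ r ∈ M, d r * qVec r.1 (x, A) = 0 := by
    intro x A hx
    calc ∑ r ∈ M, d r * qVec r.1 (x, A)
        = ∑ r ∈ M, d r * ∑ B ∈ Finset.univ.filter (fun B : Finset X => A ⊆ B),
            (-1 : ℝ) ^ (B.card - A.card) * pVec r.1 (x, B) := by
          apply Finset.sum_congr rfl; intro r _; rw [key r x A hx]
      _ = ∑ B ∈ Finset.univ.filter (fun B : Finset X => A ⊆ B),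
            (-1 : ℝ) ^ (B.card - A.card) * ∑ r ∈ M, d r * pVec r.1 (x, B) := by
          simp only [Finset.mul_sum]
          rw [Finset.sum_comm]
          apply Finset.sum_congr rfl; intro B _
          apply Finset.sum_congr rfl; intro r _; ring
      _ = 0 := by
          apply Finset.sum_eq_zero; intro B _; rw [h1]; ring
  have hzero : ∀ r ∈ M, d r = 0 := by
    by_contra hcon
    push_neg at hcon
    set N : Finset (Pref X) := M.filter (fun r => d r ≠ 0) with hN
    have hNsub : N ⊆ M := Finset.filter_subset _ _
    have hNne : N.Nonempty := by
      obtain ⟨r, hrM, hr⟩ := hcon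
      exact ⟨r, Finset.mem_filter.2 ⟨hrM, hr⟩⟩
    obtain ⟨r, hrN, x, A, hxA, hiff⟩ := hED N hNsub hNne
    have := h2 x A hxA
    have heq : ∑ s ∈ M, d s * qVec s.1 (x, A) = d r := by
      rw [← Finset.sum_filter_add_sum_filter_not M (fun s => d s ≠ 0)]
      have hrest : ∑ s ∈ M.filter (fun s => ¬ d s ≠ 0), d s * qVec s.1 (x, A) = 0 := by
        apply Finset.sum_eq_zero; intro s hs
        simp only [Finset.mem_filter, not_not] at hs
        rw [hs.2]; ring
      rw [hrest, add_zero, ← hN]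
      have : ∀ s ∈ N, d s * qVec s.1 (x, A) = if s = r then d r else 0 := by
        intro s hs
        unfold qVec
        simp only
        rw [hiff s hs]
        by_cases h : s = r
        · simp [h]
        · simp [h]
      rw [Finset.sum_congr rfl this, Finset.sum_ite_eq' N r (fun _ => d r), if_pos hrN]
    rw [heq] at this
    exact (Finset.mem_filter.1 hrN).2 this
  funext r
  by_cases hr : r ∈ M
  · have := hzero r hr
    simp only [hd] at this
    linarith
  · rw [hν.2.1 r hr, hν'.2.1 r hr]
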